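/- Let H = H₁ ⊗ H₂ be the Hilbert tensor product of two separable Hilbert spaces, and let F be a trace class operator on H. Then the partial traces tr₁F ∈ T(H₂) and tr₂F ∈ T(H₁) are trace class and satisfy ‖tr₁F‖₁ ≤ ‖F‖₁ and ‖tr₂F‖₁ ≤ ‖F‖₁. -/

import Mathlib

/-!
If `(xᵢ)`, `(yᵢ)` are orthonormal in `H₁` and `(e_j)` is a Hilbert basis of `H₂`, then
`(xᵢ ⊗ e_j)` and `(yᵢ ⊗ e_j)` are orthonormal in `H`, so
`∑ᵢ ∑_j |⟪yᵢ ⊗ e_j, F (xᵢ ⊗ e_j)⟫| ≤ ‖F‖₁`.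
For a single pair of unit vectors this shows that the series
`(x, y) ↦ ∑_j ⟪y ⊗ e_j, F (x ⊗ e_j)⟫` converges absolutely and defines a sesquilinear form
bounded by `‖F‖₁ ‖x‖ ‖y‖`, hence (Riesz) the matrix elements of a bounded operator `tr₂ F`;
for `n` pairs it bounds the sums whose supremum is `‖tr₂ F‖₁`.
Exchanging the two factors gives `tr₁ F`.
-/

noncomputable section

open Filter Topology

local notation "⟪" x ", " y "⟫" => @inner ℂ _ _ x y

/-- The trace norm of a bounded operator on a complex Hilbert space, defined as the
supremum over all pairs of finite orthonormal families of `∑ i, ‖⟪L (x i), y i⟫‖`.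
For trace class operators this equals the sum of the singular values, and an operator
is trace class iff this is finite. -/
def traceNorm {H : Type*} [NormedAddCommGroup H] [InnerProductSpace ℂ H]
    (L : H →L[ℂ] H) : ENNReal :=
  ⨆ (n : ℕ) (x : Fin n → H) (_ : Orthonormal ℂ x) (y : Fin n → H) (_ : Orthonormal ℂ y),
    ∑ i, (‖⟪L (x i), y i⟫‖₊ : ENNReal)

/-- index set of a chosen Hilbert basis of `H` -/
def hIndex (H : Type*) [NormedAddCommGroup H] [InnerProductSpace ℂ H] [CompleteSpace H] :
    Set H :=
  (exists_hilbertBasis ℂ H).choose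

/-- a chosen Hilbert basis of `H` -/
def hBasis (H : Type*) [NormedAddCommGroup H] [InnerProductSpace ℂ H] [CompleteSpace H] :
    HilbertBasis (hIndex H) ℂ H :=
  (exists_hilbertBasis ℂ H).choose_spec.choose

/-- `tp` realizes `H` as the Hilbert tensor product of `H₁` and `H₂`:
it is bilinear, satisfies `⟪x ⊗ y, u ⊗ v⟫ = ⟪x, u⟫⟪y, v⟫`, and the span of the
elementary tensors is dense in `H`. -/
structure IsHilbertTensor {H₁ H₂ H : Type*}
    [NormedAddCommGroup H₁] [InnerProductSpace ℂ H₁]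
    [NormedAddCommGroup H₂] [InnerProductSpace ℂ H₂]
    [NormedAddCommGroup H] [InnerProductSpace ℂ H]
    (tp : H₁ → H₂ → H) : Prop where
  inner_tp : ∀ (x u : H₁) (y v : H₂), ⟪tp x y, tp u v⟫ = ⟪x, u⟫ * ⟪y, v⟫
  add_left : ∀ (x x' : H₁) (y : H₂), tp (x + x') y = tp x y + tp x' y
  smul_left : ∀ (c : ℂ) (x : H₁) (y : H₂), tp (c • x) y = c • tp x y
  add_right : ∀ (x : H₁) (y y' : H₂), tp x (y + y') = tp x y + tp x y'
  smul_right : ∀ (c : ℂ) (x : H₁) (y : H₂), tp x (c • y) = c • tp x y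
  dense_span : Dense (Submodule.span ℂ {v : H | ∃ x y, v = tp x y} : Set H)

/-- `C` is the partial trace over `H₂` (denoted `tr₂ F`) of the operator `F` on
`H = H₁ ⊗ H₂`: its matrix elements are `⟨(tr₂ F) x, y⟩ = ∑_j ⟨F (x ⊗ e_j), y ⊗ e_j⟩`
for a Hilbert basis `(e_j)` of `H₂`; this characterizes the map determined by
`tr₂((x⊗y)(u⊗v)*) = ⟨y,v⟩ x u*`. -/
def IsPartialTrace₂ {H₁ H₂ H : Type*}
    [NormedAddCommGroup H₁] [InnerProductSpace ℂ H₁] [CompleteSpace H₁]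
    [NormedAddCommGroup H₂] [InnerProductSpace ℂ H₂] [CompleteSpace H₂]
    [NormedAddCommGroup H] [InnerProductSpace ℂ H]
    (tp : H₁ → H₂ → H) (F : H →L[ℂ] H) (C : H₁ →L[ℂ] H₁) : Prop :=
  ∀ x y : H₁, ⟪y, C x⟫ = ∑' j : hIndex H₂, ⟪tp y (hBasis H₂ j), F (tp x (hBasis H₂ j))⟫

/-- `D` is the partial trace over `H₁` (denoted `tr₁ F`) of the operator `F` on
`H = H₁ ⊗ H₂`. -/
def IsPartialTrace₁ {H₁ H₂ H : Type*}
    [NormedAddCommGroup H₁] [InnerProductSpace ℂ H₁] [CompleteSpace H₁]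
    [NormedAddCommGroup H₂] [InnerProductSpace ℂ H₂] [CompleteSpace H₂]
    [NormedAddCommGroup H] [InnerProductSpace ℂ H]
    (tp : H₁ → H₂ → H) (F : H →L[ℂ] H) (D : H₂ →L[ℂ] H₂) : Prop :=
  ∀ u v : H₂, ⟪v, D u⟫ = ∑' i : hIndex H₁, ⟪tp (hBasis H₁ i) v, F (tp (hBasis H₁ i) u)⟫

variable {H₁ H₂ H : Type*}
  [NormedAddCommGroup H₁] [InnerProductSpace ℂ H₁] [CompleteSpace H₁]
  [TopologicalSpace.SeparableSpace H₁]
  [NormedAddCommGroup H₂] [InnerProductSpace ℂ H₂] [CompleteSpace H₂]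
  [TopologicalSpace.SeparableSpace H₂]
  [NormedAddCommGroup H] [InnerProductSpace ℂ H] [CompleteSpace H]
  [TopologicalSpace.SeparableSpace H]

open scoped ENNReal

section TraceNorm

variable {E : Type*} [NormedAddCommGroup E] [InnerProductSpace ℂ E]

lemma enorm_inner_symm (x y : E) : ‖⟪x, y⟫‖ₑ = ‖⟪y, x⟫‖ₑ := by
  rw [← inner_conj_symm, RCLike.enorm_conj]

lemma sum_enorm_inner_le_traceNorm (F : E →L[ℂ] E) {ι : Type*} [Fintype ι] {x y : ι → E}
    (hx : Orthonormal ℂ x) (hy : Orthonormal ℂ y) :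
    ∑ i, ‖⟪F (x i), y i⟫‖ₑ ≤ traceNorm F := by
  let e := (Fintype.equivFin ι).symm
  rw [← e.sum_comp]
  exact le_iSup_of_le (Fintype.card ι) <| le_iSup_of_le (x ∘ e) <|
    le_iSup_of_le (hx.comp e e.injective) <| le_iSup_of_le (y ∘ e) <|
    le_iSup_of_le (hy.comp e e.injective) le_rfl

lemma tsum_enorm_inner_le_traceNorm (F : E →L[ℂ] E) {ι : Type*} {x y : ι → E}
    (hx : Orthonormal ℂ x) (hy : Orthonormal ℂ y) :
    ∑' i, ‖⟪F (x i), y i⟫‖ₑ ≤ traceNorm F := by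
  rw [ENNReal.tsum_eq_iSup_sum]
  refine iSup_le fun s => ?_
  rw [← Finset.sum_coe_sort]
  exact sum_enorm_inner_le_traceNorm F (hx.comp _ Subtype.val_injective)
    (hy.comp _ Subtype.val_injective)

end TraceNorm

lemma enorm_ofReal_norm {E : Type*} [SeminormedAddCommGroup E] (z : E) : ‖(‖z‖ : ℂ)‖ₑ = ‖z‖ₑ := by
  rw [← enorm_norm, Complex.norm_real, norm_norm, enorm_norm]

namespace IsHilbertTensor

variable {E₁ E₂ E : Type*} [NormedAddCommGroup E₁] [InnerProductSpace ℂ E₁]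
  [NormedAddCommGroup E₂] [InnerProductSpace ℂ E₂] [NormedAddCommGroup E] [InnerProductSpace ℂ E]
  {tp : E₁ → E₂ → E}

lemma symm (htp : IsHilbertTensor tp) : IsHilbertTensor fun y x => tp x y where
  inner_tp x u y v := by rw [htp.inner_tp, mul_comm]
  add_left x x' y := htp.add_right y x x'
  smul_left c x y := htp.smul_right c y x
  add_right x y y' := htp.add_left y y' x
  smul_right c x y := htp.smul_left c y x
  dense_span := by
    convert htp.dense_span using 5
    exact exists_comm

lemma zero_left (htp : IsHilbertTensor tp) (y : E₂) : tp 0 y = 0 := by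
  simpa using htp.smul_left 0 0 y

lemma orthonormal_prod (htp : IsHilbertTensor tp) {ι κ : Type*} {a : ι → E₁} {b : κ → E₂}
    (ha : Orthonormal ℂ a) (hb : Orthonormal ℂ b) :
    Orthonormal ℂ fun p : ι × κ => tp (a p.1) (b p.2) := by
  classical
  rw [orthonormal_iff_ite] at ha hb ⊢
  intro p q
  rw [htp.inner_tp, ha, hb]
  by_cases h₁ : p.1 = q.1 <;> by_cases h₂ : p.2 = q.2 <;> simp [h₁, h₂, Prod.ext_iff]

lemma tsum_tsum_enorm_inner_le_traceNorm (htp : IsHilbertTensor tp) (F : E →L[ℂ] E)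
    {κ : Type*} {b : κ → E₂} (hb : Orthonormal ℂ b) {ι : Type*} {x y : ι → E₁}
    (hx : Orthonormal ℂ x) (hy : Orthonormal ℂ y) :
    ∑' i, ∑' j, ‖⟪tp (y i) (b j), F (tp (x i) (b j))⟫‖ₑ ≤ traceNorm F := by
  simp_rw [enorm_inner_symm (tp (y _) _)]
  rw [← ENNReal.tsum_prod]
  exact tsum_enorm_inner_le_traceNorm F (htp.orthonormal_prod hx hb) (htp.orthonormal_prod hy hb)

lemma tsum_enorm_inner_le (htp : IsHilbertTensor tp) (F : E →L[ℂ] E)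
    {κ : Type*} {b : κ → E₂} (hb : Orthonormal ℂ b) (x y : E₁) :
    ∑' j, ‖⟪tp y (b j), F (tp x (b j))⟫‖ₑ ≤ ‖x‖ₑ * ‖y‖ₑ * traceNorm F := by
  rcases eq_or_ne x 0 with rfl | hx
  · simp [htp.zero_left]
  rcases eq_or_ne y 0 with rfl | hy
  · simp [htp.zero_left]
  have unit_smul (z : E₁) (hz : z ≠ 0) : ∃ u : E₁, ‖u‖ = 1 ∧ z = (‖z‖ : ℂ) • u :=
    ⟨(‖z‖ : ℂ)⁻¹ • z, norm_smul_inv_norm hz, (smul_inv_smul₀ (by simpa using hz) z).symm⟩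
  obtain ⟨u, hu, hxu⟩ := unit_smul x hx
  obtain ⟨v, hv, hyv⟩ := unit_smul y hy
  calc ∑' j, ‖⟪tp y (b j), F (tp x (b j))⟫‖ₑ
      = ‖x‖ₑ * ‖y‖ₑ * ∑' j, ‖⟪tp v (b j), F (tp u (b j))⟫‖ₑ := by
        rw [← ENNReal.tsum_mul_left]
        refine tsum_congr fun j => ?_
        conv_lhs => rw [hxu, hyv]
        rw [htp.smul_left, htp.smul_left, map_smul, inner_smul_left, inner_smul_right, enorm_mul,
          enorm_mul, RCLike.enorm_conj, enorm_ofReal_norm, enorm_ofReal_norm, mul_left_comm,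
          mul_assoc]
    _ ≤ ‖x‖ₑ * ‖y‖ₑ * traceNorm F := by
        gcongr
        simpa using htp.tsum_tsum_enorm_inner_le_traceNorm F hb
          (x := fun _ : Unit => u) (y := fun _ : Unit => v) (by simpa) (by simpa)

end IsHilbertTensor

section PartialTrace

variable {E₁ E₂ E : Type*} [NormedAddCommGroup E₁] [InnerProductSpace ℂ E₁]
  [NormedAddCommGroup E₂] [InnerProductSpace ℂ E₂] [CompleteSpace E₂]
  [NormedAddCommGroup E] [InnerProductSpace ℂ E] {tp : E₁ → E₂ → E} {F : E →L[ℂ] E}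

def partialTraceForm₂ (tp : E₁ → E₂ → E) (F : E →L[ℂ] E) (x y : E₁) : ℂ :=
  ∑' j : hIndex E₂, ⟪tp y (hBasis E₂ j), F (tp x (hBasis E₂ j))⟫

namespace IsHilbertTensor

lemma summable_inner_hBasis (htp : IsHilbertTensor tp) (hF : traceNorm F ≠ ⊤) (x y : E₁) :
    Summable fun j : hIndex E₂ => ⟪tp y (hBasis E₂ j), F (tp x (hBasis E₂ j))⟫ := by
  refine .of_norm (tsum_enorm_ne_top_iff_summable_norm.mp (ne_top_of_le_ne_top ?_
    (htp.tsum_enorm_inner_le F (hBasis E₂).orthonormal x y)))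
  exact ENNReal.mul_ne_top (ENNReal.mul_ne_top enorm_ne_top enorm_ne_top) hF

lemma partialTraceForm₂_add_left (htp : IsHilbertTensor tp) (hF : traceNorm F ≠ ⊤) (x x' y : E₁) :
    partialTraceForm₂ tp F (x + x') y =
      partialTraceForm₂ tp F x y + partialTraceForm₂ tp F x' y := by
  rw [partialTraceForm₂, partialTraceForm₂, partialTraceForm₂,
    ← (htp.summable_inner_hBasis hF x y).tsum_add (htp.summable_inner_hBasis hF x' y)]
  simp only [htp.add_left, map_add, inner_add_right]

lemma partialTraceForm₂_add_right (htp : IsHilbertTensor tp) (hF : traceNorm F ≠ ⊤) (x y y' : E₁) :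
    partialTraceForm₂ tp F x (y + y') =
      partialTraceForm₂ tp F x y + partialTraceForm₂ tp F x y' := by
  rw [partialTraceForm₂, partialTraceForm₂, partialTraceForm₂,
    ← (htp.summable_inner_hBasis hF x y).tsum_add (htp.summable_inner_hBasis hF x y')]
  simp only [htp.add_left, inner_add_left]

lemma partialTraceForm₂_smul_left (htp : IsHilbertTensor tp) (c : ℂ) (x y : E₁) :
    partialTraceForm₂ tp F (c • x) y = c * partialTraceForm₂ tp F x y := by
  rw [partialTraceForm₂, partialTraceForm₂, ← tsum_mul_left]
  simp only [htp.smul_left, map_smul, inner_smul_right]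

lemma partialTraceForm₂_smul_right (htp : IsHilbertTensor tp) (c : ℂ) (x y : E₁) :
    partialTraceForm₂ tp F x (c • y) = (starRingEnd ℂ) c * partialTraceForm₂ tp F x y := by
  rw [partialTraceForm₂, partialTraceForm₂, ← tsum_mul_left]
  simp only [htp.smul_left, inner_smul_left]

lemma norm_partialTraceForm₂_le (htp : IsHilbertTensor tp) (hF : traceNorm F ≠ ⊤) (x y : E₁) :
    ‖partialTraceForm₂ tp F x y‖ ≤ (traceNorm F).toReal * ‖y‖ * ‖x‖ := by
  calc ‖partialTraceForm₂ tp F x y‖ = ‖partialTraceForm₂ tp F x y‖ₑ.toReal := (toReal_enorm _).symm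
    _ ≤ (‖x‖ₑ * ‖y‖ₑ * traceNorm F).toReal :=
        ENNReal.toReal_mono (ENNReal.mul_ne_top (ENNReal.mul_ne_top enorm_ne_top enorm_ne_top) hF)
          (enorm_tsum_le_tsum_enorm.trans (htp.tsum_enorm_inner_le F (hBasis E₂).orthonormal x y))
    _ = (traceNorm F).toReal * ‖y‖ * ‖x‖ := by simp only [ENNReal.toReal_mul, toReal_enorm]; ring

lemma exists_isPartialTrace₂ [CompleteSpace E₁] (htp : IsHilbertTensor tp)
    (hF : traceNorm F ≠ ⊤) : ∃ C : E₁ →L[ℂ] E₁, IsPartialTrace₂ tp F C := by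
  let B : E₁ →L⋆[ℂ] E₁ →L[ℂ] ℂ :=
    (LinearMap.mk₂'ₛₗ (starRingEnd ℂ) (RingHom.id ℂ) (fun y x => partialTraceForm₂ tp F x y)
      (fun y y' x => htp.partialTraceForm₂_add_right hF x y y')
      (fun c y x => htp.partialTraceForm₂_smul_right c x y)
      (fun y x x' => htp.partialTraceForm₂_add_left hF x x' y)
      (fun c y x => htp.partialTraceForm₂_smul_left c x y)).mkContinuous₂ _
      (fun y x => htp.norm_partialTraceForm₂_le hF x y)
  refine ⟨ContinuousLinearMap.adjoint (InnerProductSpace.continuousLinearMapOfBilin B),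
    fun x y => ?_⟩
  rw [ContinuousLinearMap.adjoint_inner_right, InnerProductSpace.continuousLinearMapOfBilin_apply]
  rfl

end IsHilbertTensor

lemma IsPartialTrace₂.traceNorm_le [CompleteSpace E₁] {C : E₁ →L[ℂ] E₁} (htp : IsHilbertTensor tp)
    (hC : IsPartialTrace₂ tp F C) : traceNorm C ≤ traceNorm F := by
  refine iSup_le fun n => iSup_le fun x => iSup_le fun hx => iSup_le fun y => iSup_le fun hy => ?_
  calc ∑ i, ‖⟪C (x i), y i⟫‖ₑ
      = ∑ i, ‖∑' j : hIndex E₂, ⟪tp (y i) (hBasis E₂ j), F (tp (x i) (hBasis E₂ j))⟫‖ₑ := by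
        refine Finset.sum_congr rfl fun i _ => ?_
        rw [enorm_inner_symm, hC]
    _ ≤ ∑' i, ∑' j : hIndex E₂, ‖⟪tp (y i) (hBasis E₂ j), F (tp (x i) (hBasis E₂ j))⟫‖ₑ := by
        rw [tsum_fintype]
        gcongr
        exact enorm_tsum_le_tsum_enorm
    _ ≤ traceNorm F := htp.tsum_tsum_enorm_inner_le_traceNorm F (hBasis E₂).orthonormal hx hy

end PartialTrace

/-- the partial traces of a trace class operator on `H = H₁ ⊗ H₂` exist,
are trace class, and satisfy `‖tr₂ F‖₁ ≤ ‖F‖₁` and `‖tr₁ F‖₁ ≤ ‖F‖₁`. -/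
theorem partialTrace_traceNorm_le
    (tp : H₁ → H₂ → H) (htp : IsHilbertTensor tp)
    (F : H →L[ℂ] H) (hF : traceNorm F ≠ ⊤) :
    ∃ (C : H₁ →L[ℂ] H₁) (D : H₂ →L[ℂ] H₂),
      IsPartialTrace₂ tp F C ∧ IsPartialTrace₁ tp F D ∧
      traceNorm C ≠ ⊤ ∧ traceNorm D ≠ ⊤ ∧
      traceNorm C ≤ traceNorm F ∧ traceNorm D ≤ traceNorm F := by
  obtain ⟨C, hC⟩ := htp.exists_isPartialTrace₂ hF
  obtain ⟨D, hD⟩ := htp.symm.exists_isPartialTrace₂ hF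
  have hCF : traceNorm C ≤ traceNorm F := hC.traceNorm_le htp
  have hDF : traceNorm D ≤ traceNorm F := hD.traceNorm_le htp.symm
  exact ⟨C, D, hC, hD, ne_top_of_le_ne_top hF hCF, ne_top_of_le_ne_top hF hDF, hCF, hDF⟩
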